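/- arXiv:math/0407057 — 3 statements merged into one kernel-verified Lean document; each statement's English description precedes it below -/
import Mathlib

section
/- At any regular point t of a fluid model solution n(·), the composite function F∘n is differentiable at t and (d/dt) F(n(t)) = K(n(t)) ≤ 0, with strict inequality unless n(t) ∈ M_α. -/
open Real Set

noncomputable section

/-- Feasible set for the bandwidth allocation problem at state `n`: the vector
`Λ⁺ = (Λ_i : i ∈ I₊(n))` is embedded in `ℝ^I` by requiring `L i = 0` whenever `n i = 0`. -/
def Feasible {I J : ℕ} (A : Fin J → Fin I → ℝ) (C : Fin J → ℝ)
    (n : Fin I → ℝ) : Set (Fin I → ℝ) :=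
  {L | (∀ i, 0 ≤ L i) ∧ (∀ i, n i = 0 → L i = 0) ∧ ∀ j, ∑ i, A j i * L i ≤ C j}

/-- The objective `G_n(Λ⁺)`, taking the value `⊥ = -∞` when `α ≥ 1` and some
coordinate of `Λ⁺` in `I₊(n)` vanishes. -/
def Gfun {I : ℕ} (α : ℝ) (κ : Fin I → ℝ) (n L : Fin I → ℝ) : EReal :=
  if 1 ≤ α ∧ ∃ i, 0 < n i ∧ L i = 0 then ⊥
  else if α = 1 then
    ((∑ i, if 0 < n i then κ i * n i * Real.log (L i) else 0 : ℝ) : EReal)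
  else
    ((∑ i, if 0 < n i then κ i * n i ^ α * L i ^ (1 - α) / (1 - α) else 0 : ℝ) : EReal)

/-- `L` is an optimal weighted α-fair bandwidth allocation for the state `n`,
i.e. a maximizer of `G_n` over the feasible set for `n` (with `L i = 0` for `i ∈ I₀(n)`). -/
def IsAlloc {I J : ℕ} (A : Fin J → Fin I → ℝ) (C : Fin J → ℝ) (α : ℝ)
    (κ : Fin I → ℝ) (n L : Fin I → ℝ) : Prop :=
  L ∈ Feasible A C n ∧ ∀ L' ∈ Feasible A C n, Gfun α κ n L' ≤ Gfun α κ n L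

/-- `f` is absolutely continuous on `[0, T]` for every `T > 0` (ε-δ definition with
finitely many pairwise disjoint subintervals). -/
def AbsContNonneg (f : ℝ → ℝ) : Prop :=
  ∀ T > (0:ℝ), ∀ ε > (0:ℝ), ∃ δ > (0:ℝ), ∀ (m : ℕ) (a b : Fin m → ℝ),
    (∀ k, 0 ≤ a k ∧ a k ≤ b k ∧ b k ≤ T) →
    (∀ k l, k < l → b k ≤ a l ∨ b l ≤ a k) →
    (∑ k, (b k - a k)) < δ → (∑ k, |f (b k) - f (a k)|) < ε

/-- Fluid model solution: `n : [0,∞) → ℝ₊^I` absolutely continuous, and at every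
regular point `t` the derivative conditions (13) and capacity condition (14) hold. -/
def IsFluidSol {I J : ℕ} (A : Fin J → Fin I → ℝ) (C : Fin J → ℝ)
    (ν μ : Fin I → ℝ) (Λ : (Fin I → ℝ) → Fin I → ℝ)
    (n : ℝ → Fin I → ℝ) : Prop :=
  (∀ i, AbsContNonneg fun t => n t i) ∧
  (∀ t ∈ Ici (0:ℝ), ∀ i, 0 ≤ n t i) ∧
  ∀ t ∈ Ici (0:ℝ),
    (∀ i, DifferentiableWithinAt ℝ (fun s => n s i) (Ici 0) t) →
    (∀ i, (0 < n t i →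
        HasDerivWithinAt (fun s => n s i) (ν i - μ i * Λ (n t) i) (Ici 0) t) ∧
      (n t i = 0 → HasDerivWithinAt (fun s => n s i) 0 (Ici 0) t)) ∧
    ∀ j, (∑ i, A j i * (if 0 < n t i then Λ (n t) i else ν i / μ i)) ≤ C j

/-- The set `J*` of critically loaded resources. -/
def Jstar {I J : ℕ} (A : Fin J → Fin I → ℝ) (C : Fin J → ℝ)
    (ν μ : Fin I → ℝ) : Set (Fin J) :=
  {j | ∑ i, A j i * (ν i / μ i) = C j}

/-- The workload map `w(n)`. -/
def wl {I J : ℕ} (A : Fin J → Fin I → ℝ) (μ : Fin I → ℝ)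
    (n : Fin I → ℝ) : Fin J → ℝ :=
  fun j => ∑ i, A j i * n i / μ i

/-- Feasible set of the workload optimization problem (22) for workload `w`. -/
def WFeasible {I J : ℕ} (A : Fin J → Fin I → ℝ) (C : Fin J → ℝ)
    (ν μ : Fin I → ℝ) (w : Fin J → ℝ) : Set (Fin I → ℝ) :=
  {m | (∀ i, 0 ≤ m i) ∧ ∀ j ∈ Jstar A C ν μ, w j ≤ ∑ i, A j i * m i / μ i}

/-- The Lyapunov function `F`. -/
def Ffun {I : ℕ} (α : ℝ) (κ ν μ : Fin I → ℝ) (n : Fin I → ℝ) : ℝ :=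
  (1 / (α + 1)) * ∑ i, ν i * κ i * μ i ^ (α - 1) * (n i / ν i) ^ (α + 1)

/-- The function `K` (the derivative of `F` along fluid model solutions). -/
def Kfun {I : ℕ} (α : ℝ) (κ ν μ : Fin I → ℝ)
    (Λ : (Fin I → ℝ) → Fin I → ℝ) (n : Fin I → ℝ) : ℝ :=
  ∑ i, if 0 < n i then κ i * (μ i * n i / ν i) ^ α * (ν i / μ i - Λ n i) else 0

/-!
Along a fluid model solution each coordinate has derivative `ν_i - μ_i Λ_i(n)` on `I₊(n)` and `0`
on `I₀(n)`, so the chain rule gives `(F ∘ n)' = K(n)`. Since the α-fair utility `U_α` is strictly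
concave with `U_α'(ρ_i) = ρ_i ^ (-α)`, each summand of `K(n)` is at most
`κ_i n_i^α (U_α(ρ_i) - U_α(Λ_i(n)))`, strictly unless `Λ_i(n) = ρ_i`. Summing,
`K(n) ≤ G_n(ρ⁺) - G_n(Λ(n)) ≤ 0`, because `ρ` restricted to `I₊(n)` is feasible by the load
condition and `Λ(n)` maximizes `G_n`. If `Λ_i(n) = ρ_i` on all of `I₊(n)`, the constant path at
`n` satisfies the fluid equations, i.e. `n` is invariant.
-/

/-- The α-fair utility `U_α`, so that `G_n(Λ⁺) = ∑_{i ∈ I₊(n)} κ_i n_i^α U_α(Λ_i)`. -/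
def utility (α x : ℝ) : ℝ :=
  if α = 1 then Real.log x else x ^ (1 - α) / (1 - α)

def sumUtility {I : ℕ} (α : ℝ) (κ n L : Fin I → ℝ) : ℝ :=
  ∑ i, if 0 < n i then κ i * n i ^ α * utility α (L i) else 0

def rhoPlus {I : ℕ} (ν μ n : Fin I → ℝ) : Fin I → ℝ :=
  fun i => if 0 < n i then ν i / μ i else 0

lemma rpow_sub_one_div_lt_sub_one {p t : ℝ} (hp : p < 1) (hp0 : p ≠ 0) (ht : 0 ≤ t)
    (ht0 : p < 0 → 0 < t) (ht1 : t ≠ 1) : (t ^ p - 1) / p < t - 1 := by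
  rcases hp0.lt_or_gt with hneg | hpos
  · have htpos := ht0 hneg
    have hlog : p * (t - 1) < p * Real.log t :=
      mul_lt_mul_of_neg_left (Real.log_lt_sub_one_of_pos htpos ht1) hneg
    have hexp : p * Real.log t + 1 ≤ t ^ p := by
      rw [Real.rpow_def_of_pos htpos, mul_comm (Real.log t)]
      exact Real.add_one_le_exp _
    rw [div_lt_iff_of_neg hneg]
    linarith
  · have h := rpow_one_add_lt_one_add_mul_self (s := t - 1) (by linarith)
      (sub_ne_zero.2 ht1) hpos hp
    rw [add_sub_cancel] at h
    rw [div_lt_iff₀ hpos]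
    linarith

/-- Strict concavity of `U_α` in tangent-line form: `U_α'(r) = r ^ (-α)`. -/
lemma rpow_neg_mul_sub_lt_utility_sub {α r x : ℝ} (hα : 0 < α) (hr : 0 < r) (hx : 0 ≤ x)
    (hx1 : 1 ≤ α → 0 < x) (hne : x ≠ r) :
    r ^ (-α) * (r - x) < utility α r - utility α x := by
  -- both sides are homogeneous of degree `1 - α` in `(r, x)`: reduce to `t = x / r`
  have ht1 : x / r ≠ 1 := by rwa [ne_eq, div_eq_one_iff_eq hr.ne']
  have hscale : r ^ (-α) * (r - x) = r ^ (1 - α) * (1 - x / r) := by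
    rw [sub_eq_add_neg 1 α, Real.rpow_add hr, Real.rpow_one]
    field_simp
  rw [hscale, utility, utility]
  split_ifs with h1
  · subst h1
    have hxpos := hx1 le_rfl
    have hlog := Real.log_lt_sub_one_of_pos (div_pos hxpos hr) ht1
    rw [Real.log_div hxpos.ne' hr.ne'] at hlog
    rw [sub_self, Real.rpow_zero, one_mul]
    linarith
  · have hp : 1 - α ≠ 0 := sub_ne_zero.2 (Ne.symm h1)
    have hbern := rpow_sub_one_div_lt_sub_one (by linarith) hp (div_nonneg hx hr.le)
      (fun h => div_pos (hx1 (by linarith)) hr) ht1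
    rw [Real.div_rpow hx hr.le] at hbern
    have hrp : 0 < r ^ (1 - α) := Real.rpow_pos_of_pos hr _
    have hscaled := mul_lt_mul_of_pos_left hbern hrp
    have hunscale : r ^ (1 - α) * ((x ^ (1 - α) / r ^ (1 - α) - 1) / (1 - α))
        = x ^ (1 - α) / (1 - α) - r ^ (1 - α) / (1 - α) := by
      field_simp
    rw [hunscale] at hscaled
    linarith

lemma Gfun_eq_sumUtility {I : ℕ} {α : ℝ} {κ n L : Fin I → ℝ}
    (h : ¬(1 ≤ α ∧ ∃ i, 0 < n i ∧ L i = 0)) :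
    Gfun α κ n L = sumUtility α κ n L := by
  rw [Gfun, if_neg h, sumUtility]
  split_ifs with h1
  · subst h1
    simp [utility]
  · simp [utility, h1, mul_div_assoc]

section Allocation

variable {I J : ℕ} {A : Fin J → Fin I → ℝ} {C : Fin J → ℝ} {α : ℝ} {κ ν μ : Fin I → ℝ}
  {n L L' : Fin I → ℝ}

lemma rhoPlus_mem_feasible (hA : ∀ j i, 0 ≤ A j i) (hρ : ∀ i, 0 ≤ ν i / μ i)
    (hload : ∀ j, ∑ i, A j i * (ν i / μ i) ≤ C j) : rhoPlus ν μ n ∈ Feasible A C n := by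
  refine ⟨fun i => ?_, fun i hi => by simp [rhoPlus, hi], fun j => ?_⟩
  · unfold rhoPlus
    split_ifs
    exacts [hρ i, le_rfl]
  · refine le_trans (Finset.sum_le_sum fun i _ => mul_le_mul_of_nonneg_left ?_ (hA j i)) (hload j)
    unfold rhoPlus
    split_ifs
    exacts [le_rfl, hρ i]

lemma rhoPlus_nondegenerate (hρ : ∀ i, 0 < ν i / μ i) :
    ¬(1 ≤ α ∧ ∃ i, 0 < n i ∧ rhoPlus ν μ n i = 0) := by
  rintro ⟨-, i, hi, h0⟩
  simp only [rhoPlus, if_pos hi] at h0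
  exact (hρ i).ne' h0

/-- The excluded case is `G_n = -∞`: a maximizer has finite utility as soon as some feasible
point does. -/
lemma IsAlloc.nondegenerate (hL : IsAlloc A C α κ n L) (hL' : L' ∈ Feasible A C n)
    (h' : ¬(1 ≤ α ∧ ∃ i, 0 < n i ∧ L' i = 0)) : ¬(1 ≤ α ∧ ∃ i, 0 < n i ∧ L i = 0) := by
  intro h
  have hle := hL.2 L' hL'
  rw [Gfun_eq_sumUtility h', Gfun, if_pos h] at hle
  exact EReal.coe_ne_bot _ (le_bot_iff.1 hle)

lemma IsAlloc.sumUtility_le (hL : IsAlloc A C α κ n L) (hL' : L' ∈ Feasible A C n)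
    (h' : ¬(1 ≤ α ∧ ∃ i, 0 < n i ∧ L' i = 0)) : sumUtility α κ n L' ≤ sumUtility α κ n L := by
  have hle := hL.2 L' hL'
  rwa [Gfun_eq_sumUtility h', Gfun_eq_sumUtility (hL.nondegenerate hL' h'),
    EReal.coe_le_coe_iff] at hle

lemma IsAlloc.sumUtility_rhoPlus_le (hA : ∀ j i, 0 ≤ A j i) (hρ : ∀ i, 0 < ν i / μ i)
    (hload : ∀ j, ∑ i, A j i * (ν i / μ i) ≤ C j) (hL : IsAlloc A C α κ n L) :
    sumUtility α κ n (rhoPlus ν μ n) ≤ sumUtility α κ n L :=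
  hL.sumUtility_le (rhoPlus_mem_feasible hA (fun i => (hρ i).le) hload) (rhoPlus_nondegenerate hρ)

lemma IsAlloc.pos_of_one_le (hA : ∀ j i, 0 ≤ A j i) (hρ : ∀ i, 0 < ν i / μ i)
    (hload : ∀ j, ∑ i, A j i * (ν i / μ i) ≤ C j) (hL : IsAlloc A C α κ n L) (hα : 1 ≤ α)
    (i : Fin I) (hi : 0 < n i) : 0 < L i :=
  (hL.1.1 i).lt_of_ne' fun h0 => hL.nondegenerate
    (rhoPlus_mem_feasible hA (fun i => (hρ i).le) hload) (rhoPlus_nondegenerate hρ) ⟨hα, i, hi, h0⟩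

end Allocation

lemma mul_div_rpow_mul_sub_lt_utility_sub {α κ m ρ x : ℝ} (hα : 0 < α) (hκ : 0 < κ)
    (hm : 0 < m) (hρ : 0 < ρ) (hx : 0 ≤ x) (hx1 : 1 ≤ α → 0 < x) (hne : x ≠ ρ) :
    κ * (m / ρ) ^ α * (ρ - x) < κ * m ^ α * (utility α ρ - utility α x) := by
  have hsplit : κ * (m / ρ) ^ α * (ρ - x) = κ * m ^ α * (ρ ^ (-α) * (ρ - x)) := by
    rw [Real.div_rpow hm.le hρ.le, Real.rpow_neg hρ.le]
    ring
  rw [hsplit]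
  exact mul_lt_mul_of_pos_left (rpow_neg_mul_sub_lt_utility_sub hα hρ hx hx1 hne)
    (mul_pos hκ (Real.rpow_pos_of_pos hm α))

lemma mul_div_rpow_mul_sub_le_utility_sub {α κ m ρ x : ℝ} (hα : 0 < α) (hκ : 0 < κ)
    (hm : 0 < m) (hρ : 0 < ρ) (hx : 0 ≤ x) (hx1 : 1 ≤ α → 0 < x) :
    κ * (m / ρ) ^ α * (ρ - x) ≤ κ * m ^ α * (utility α ρ - utility α x) := by
  rcases eq_or_ne x ρ with rfl | hne
  · simp
  · exact (mul_div_rpow_mul_sub_lt_utility_sub hα hκ hm hρ hx hx1 hne).le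

section Lyapunov

variable {I J : ℕ} {A : Fin J → Fin I → ℝ} {C : Fin J → ℝ} {α : ℝ} {κ ν μ : Fin I → ℝ}
  {Λ : (Fin I → ℝ) → Fin I → ℝ} {n : Fin I → ℝ}

lemma sumUtility_rhoPlus_sub (L : Fin I → ℝ) :
    sumUtility α κ n (rhoPlus ν μ n) - sumUtility α κ n L =
      ∑ i, if 0 < n i then κ i * n i ^ α * (utility α (ν i / μ i) - utility α (L i)) else 0 := by
  rw [sumUtility, sumUtility, ← Finset.sum_sub_distrib]
  refine Finset.sum_congr rfl fun i _ => ?_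
  by_cases hi : 0 < n i <;> simp [rhoPlus, hi, mul_sub]

lemma Kfun_le_sumUtility_sub (hα : 0 < α) (hκ : ∀ i, 0 < κ i) (hρ : ∀ i, 0 < ν i / μ i)
    (hL0 : ∀ i, 0 ≤ Λ n i) (hL1 : 1 ≤ α → ∀ i, 0 < n i → 0 < Λ n i) :
    Kfun α κ ν μ Λ n ≤ sumUtility α κ n (rhoPlus ν μ n) - sumUtility α κ n (Λ n) := by
  rw [sumUtility_rhoPlus_sub, Kfun]
  refine Finset.sum_le_sum fun i _ => ?_
  split_ifs with hi
  · rw [mul_comm (μ i), ← div_div_eq_mul_div]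
    exact mul_div_rpow_mul_sub_le_utility_sub hα (hκ i) hi (hρ i) (hL0 i) (hL1 · i hi)
  · exact le_rfl

lemma Kfun_lt_sumUtility_sub (hα : 0 < α) (hκ : ∀ i, 0 < κ i) (hρ : ∀ i, 0 < ν i / μ i)
    (hL0 : ∀ i, 0 ≤ Λ n i) (hL1 : 1 ≤ α → ∀ i, 0 < n i → 0 < Λ n i)
    (hne : ∃ i, 0 < n i ∧ Λ n i ≠ ν i / μ i) :
    Kfun α κ ν μ Λ n < sumUtility α κ n (rhoPlus ν μ n) - sumUtility α κ n (Λ n) := by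
  obtain ⟨i₀, hi₀, hne₀⟩ := hne
  rw [sumUtility_rhoPlus_sub, Kfun]
  refine Finset.sum_lt_sum (fun i _ => ?_) ⟨i₀, Finset.mem_univ _, ?_⟩
  · split_ifs with hi
    · rw [mul_comm (μ i), ← div_div_eq_mul_div]
      exact mul_div_rpow_mul_sub_le_utility_sub hα (hκ i) hi (hρ i) (hL0 i) (hL1 · i hi)
    · exact le_rfl
  · rw [if_pos hi₀, if_pos hi₀, mul_comm (μ i₀), ← div_div_eq_mul_div]
    exact mul_div_rpow_mul_sub_lt_utility_sub hα (hκ i₀) hi₀ (hρ i₀) (hL0 i₀) (hL1 · i₀ hi₀) hne₀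

lemma IsAlloc.Kfun_nonpos (hA : ∀ j i, 0 ≤ A j i) (hload : ∀ j, ∑ i, A j i * (ν i / μ i) ≤ C j)
    (hα : 0 < α) (hκ : ∀ i, 0 < κ i) (hρ : ∀ i, 0 < ν i / μ i)
    (hL : IsAlloc A C α κ n (Λ n)) : Kfun α κ ν μ Λ n ≤ 0 :=
  (Kfun_le_sumUtility_sub hα hκ hρ hL.1.1 (hL.pos_of_one_le hA hρ hload)).trans
    (sub_nonpos.2 (hL.sumUtility_rhoPlus_le hA hρ hload))

lemma IsAlloc.Kfun_neg (hA : ∀ j i, 0 ≤ A j i) (hload : ∀ j, ∑ i, A j i * (ν i / μ i) ≤ C j)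
    (hα : 0 < α) (hκ : ∀ i, 0 < κ i) (hρ : ∀ i, 0 < ν i / μ i)
    (hL : IsAlloc A C α κ n (Λ n)) (hne : ∃ i, 0 < n i ∧ Λ n i ≠ ν i / μ i) :
    Kfun α κ ν μ Λ n < 0 :=
  (Kfun_lt_sumUtility_sub hα hκ hρ hL.1.1 (hL.pos_of_one_le hA hρ hload) hne).trans_le
    (sub_nonpos.2 (hL.sumUtility_rhoPlus_le hA hρ hload))

end Lyapunov

lemma hasDerivWithinAt_Ffun_comp {I : ℕ} {α : ℝ} (hα : 0 ≤ α) {κ ν μ : Fin I → ℝ}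
    (hν : ∀ i, ν i ≠ 0) {n : ℝ → Fin I → ℝ} {d : Fin I → ℝ} {s : Set ℝ} {t : ℝ}
    (hd : ∀ i, HasDerivWithinAt (fun u => n u i) (d i) s t) :
    HasDerivWithinAt (fun u => Ffun α κ ν μ (n u))
      (∑ i, κ i * μ i ^ (α - 1) * (n t i / ν i) ^ α * d i) s t := by
  have hsum := HasDerivWithinAt.fun_sum (u := Finset.univ) fun i _ =>
    (((Real.hasDerivAt_rpow_const (x := n t i / ν i) (p := α + 1)
      (Or.inr (by linarith))).comp_hasDerivWithinAt t ((hd i).div_const (ν i))).const_mul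
      (ν i * κ i * μ i ^ (α - 1)))
  refine (hsum.const_mul (1 / (α + 1))).congr_deriv ?_
  rw [Finset.mul_sum]
  refine Finset.sum_congr rfl fun i _ => ?_
  have hνi := hν i
  rw [add_sub_cancel_right]
  field_simp

lemma IsFluidSol.hasDerivWithinAt_Ffun {I J : ℕ} {A : Fin J → Fin I → ℝ} {C : Fin J → ℝ}
    {α : ℝ} {κ ν μ : Fin I → ℝ} {Λ : (Fin I → ℝ) → Fin I → ℝ} {n : ℝ → Fin I → ℝ}
    (hsol : IsFluidSol A C ν μ Λ n) (hα : 0 ≤ α) (hν : ∀ i, 0 < ν i) (hμ : ∀ i, 0 < μ i)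
    {t : ℝ} (ht : t ∈ Ici 0) (hreg : ∀ i, DifferentiableWithinAt ℝ (fun s => n s i) (Ici 0) t) :
    HasDerivWithinAt (fun s => Ffun α κ ν μ (n s)) (Kfun α κ ν μ Λ (n t)) (Ici 0) t := by
  have hm := hsol.2.1 t ht
  have hd := (hsol.2.2 t ht hreg).1
  refine (hasDerivWithinAt_Ffun_comp hα (fun i => (hν i).ne')
    (d := fun i => if 0 < n t i then ν i - μ i * Λ (n t) i else 0) fun i => ?_).congr_deriv ?_
  · split_ifs with hi
    · exact (hd i).1 hi
    · exact (hd i).2 (le_antisymm (not_lt.1 hi) (hm i))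
  · refine Finset.sum_congr rfl fun i _ => ?_
    split_ifs with hi
    · rw [mul_div_assoc, Real.mul_rpow (hμ i).le (div_nonneg (hm i) (hν i).le),
        Real.rpow_sub_one (hμ i).ne']
      have hμi := (hμ i).ne'
      field_simp
    · rw [mul_zero]

lemma isFluidSol_const {I J : ℕ} {A : Fin J → Fin I → ℝ} {C : Fin J → ℝ} {ν μ : Fin I → ℝ}
    {Λ : (Fin I → ℝ) → Fin I → ℝ} {m : Fin I → ℝ} (hμ : ∀ i, μ i ≠ 0) (hm : ∀ i, 0 ≤ m i)
    (hload : ∀ j, ∑ i, A j i * (ν i / μ i) ≤ C j) (h : ∀ i, 0 < m i → Λ m i = ν i / μ i) :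
    IsFluidSol A C ν μ Λ fun _ => m := by
  refine ⟨fun i T _ ε hε => ⟨1, one_pos, fun _ _ _ _ _ _ => by simpa using hε⟩,
    fun _ _ => hm, fun s _ _ => ⟨fun i => ⟨fun hi => ?_, fun _ => hasDerivWithinAt_const _ _ _⟩,
    fun j => ?_⟩⟩
  · rw [h i hi, mul_div_cancel₀ _ (hμ i), sub_self]
    exact hasDerivWithinAt_const _ _ _
  · refine le_trans (le_of_eq (Finset.sum_congr rfl fun i _ => ?_)) (hload j)
    split_ifs with hi
    · rw [h i hi]
    · rfl

theorem stmt11_general {I J : ℕ}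
    (A : Fin J → Fin I → ℝ) (hA01 : ∀ j i, A j i = 0 ∨ A j i = 1)
    (C : Fin J → ℝ)
    (α : ℝ) (hα : 0 < α) (κ : Fin I → ℝ) (hκ : ∀ i, 0 < κ i)
    (ν μ : Fin I → ℝ) (hν : ∀ i, 0 < ν i) (hμ : ∀ i, 0 < μ i)
    (hload : ∀ j, (∑ i, A j i * (ν i / μ i)) ≤ C j)
    (Λ : (Fin I → ℝ) → Fin I → ℝ)
    (hΛ : ∀ n : Fin I → ℝ, (∀ i, 0 ≤ n i) → IsAlloc A C α κ n (Λ n))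
    (n : ℝ → Fin I → ℝ) (hsol : IsFluidSol A C ν μ Λ n)
    (t : ℝ) (ht : t ∈ Ici (0:ℝ))
    (hreg : ∀ i, DifferentiableWithinAt ℝ (fun s => n s i) (Ici 0) t) :
    HasDerivWithinAt (fun s => Ffun α κ ν μ (n s)) (Kfun α κ ν μ Λ (n t)) (Ici 0) t ∧
    Kfun α κ ν μ Λ (n t) ≤ 0 ∧
    ((¬ IsFluidSol A C ν μ Λ fun _ => n t) → Kfun α κ ν μ Λ (n t) < 0) := by
  have hA : ∀ j i, 0 ≤ A j i := fun j i => by rcases hA01 j i with h | h <;> simp [h]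
  have hρ : ∀ i, 0 < ν i / μ i := fun i => div_pos (hν i) (hμ i)
  have hm := hsol.2.1 t ht
  have hL := hΛ (n t) hm
  refine ⟨hsol.hasDerivWithinAt_Ffun hα.le hν hμ ht hreg,
    hL.Kfun_nonpos hA hload hα hκ hρ, fun hnot => hL.Kfun_neg hA hload hα hκ hρ ?_⟩
  by_contra! hall
  exact hnot (isFluidSol_const (fun i => (hμ i).ne') hm hload hall)

theorem stmt11 {I J : ℕ} (hI : 0 < I) (hJ : 0 < J)
    (A : Fin J → Fin I → ℝ) (hA01 : ∀ j i, A j i = 0 ∨ A j i = 1)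
    (hAcol : ∀ i, ∃ j, A j i = 1) (hArank : LinearIndependent ℝ A)
    (C : Fin J → ℝ) (hC : ∀ j, 0 < C j)
    (α : ℝ) (hα : 0 < α) (κ : Fin I → ℝ) (hκ : ∀ i, 0 < κ i)
    (ν μ : Fin I → ℝ) (hν : ∀ i, 0 < ν i) (hμ : ∀ i, 0 < μ i)
    (hload : ∀ j, (∑ i, A j i * (ν i / μ i)) ≤ C j)
    (hJs : (Jstar A C ν μ).Nonempty)
    (Λ : (Fin I → ℝ) → Fin I → ℝ)
    (hΛ : ∀ n : Fin I → ℝ, (∀ i, 0 ≤ n i) → IsAlloc A C α κ n (Λ n))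
    (n : ℝ → Fin I → ℝ) (hsol : IsFluidSol A C ν μ Λ n)
    (t : ℝ) (ht : t ∈ Ici (0:ℝ))
    (hreg : ∀ i, DifferentiableWithinAt ℝ (fun s => n s i) (Ici 0) t) :
    HasDerivWithinAt (fun s => Ffun α κ ν μ (n s)) (Kfun α κ ν μ Λ (n t)) (Ici 0) t ∧
    Kfun α κ ν μ Λ (n t) ≤ 0 ∧
    ((¬ IsFluidSol A C ν μ Λ fun _ => n t) → Kfun α κ ν μ Λ (n t) < 0) :=
  stmt11_general A hA01 C α hα κ hκ ν μ hν hμ hload Λ hΛ n hsol t ht hreg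
end
end

section
/- For any fluid model solution n(·) and any j ∈ J*, the function t ↦ w_j(n(t)) is nondecreasing on [0,∞). -/
open Real Set

noncomputable section

/-!
Each coordinate of a fluid model solution is absolutely continuous, hence so is the workload
`w_j`, and `w_j(b) - w_j(a) = ∫_a^b w_j'`. At a regular point `t`,
`w_j'(t) = ∑_i A_ji ρ_i - ∑_i A_ji λ_i`, where `λ_i = Λ_i(n(t))` on busy routes and `λ_i = ρ_i` on
empty ones. For `j ∈ J*` the first sum is `C_j` and the capacity condition bounds the second by
`C_j`, so `w_j' ≥ 0` almost everywhere.
-/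

theorem le_or_le_of_disjoint_Ioc {a₁ a₂ b₁ b₂ : ℝ} (ha : a₁ < a₂) (hb : b₁ < b₂)
    (h : Disjoint (Ioc a₁ a₂) (Ioc b₁ b₂)) : a₂ ≤ b₁ ∨ b₂ ≤ a₁ := by
  rw [Ioc_disjoint_Ioc, min_le_iff, le_max_iff, le_max_iff] at h
  rcases h with (h | h) | (h | h)
  · exact absurd h ha.not_ge
  · exact Or.inl h
  · exact Or.inr h
  · exact absurd h hb.not_ge

theorem abs_sub_max_min_eq_dist (f : ℝ → ℝ) (x y : ℝ) :
    |f (max x y) - f (min x y)| = dist (f x) (f y) := by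
  rcases le_total x y with h | h
  · rw [max_eq_right h, min_eq_left h, Real.dist_eq, abs_sub_comm]
  · rw [max_eq_left h, min_eq_right h, Real.dist_eq]

theorem AbsContNonneg.absolutelyContinuousOnInterval {f : ℝ → ℝ} (hf : AbsContNonneg f)
    {a b : ℝ} (ha : 0 ≤ a) (hb : 0 ≤ b) : AbsolutelyContinuousOnInterval f a b := by
  rw [absolutelyContinuousOnInterval_iff]
  intro ε hε
  obtain ⟨δ, hδ, hf⟩ := hf (max a b + 1) (by positivity) ε hε
  refine ⟨δ, hδ, ?_⟩
  rintro ⟨m, E⟩ ⟨hmem, hdisj⟩ hlen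
  have hmem' (k : Fin m) : 0 ≤ min (E k).1 (E k).2 ∧ max (E k).1 (E k).2 ≤ max a b + 1 := by
    obtain ⟨⟨h₁, h₂⟩, ⟨h₃, h₄⟩⟩ := hmem k (Finset.mem_range.2 k.2)
    exact ⟨le_min ((le_min ha hb).trans h₁) ((le_min ha hb).trans h₃),
      max_le (by linarith) (by linarith)⟩
  -- Degenerate intervals are moved to `[0, 0]`, where they do not meet any other interval.
  let p : Fin m → ℝ := fun k => if (E k).1 = (E k).2 then 0 else min (E k).1 (E k).2
  let q : Fin m → ℝ := fun k => if (E k).1 = (E k).2 then 0 else max (E k).1 (E k).2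
  have hpq (k : Fin m) : q k - p k = dist (E k).1 (E k).2 ∧
      |f (q k) - f (p k)| = dist (f (E k).1) (f (E k).2) := by
    by_cases h : (E k).1 = (E k).2
    · simp [p, q, h]
    · simp only [p, q, h, if_false, max_sub_min_eq_abs', Real.dist_eq, abs_sub_max_min_eq_dist,
        and_true]
  have hbounds (k : Fin m) : 0 ≤ p k ∧ p k ≤ q k ∧ q k ≤ max a b + 1 := by
    by_cases h : (E k).1 = (E k).2
    · simp only [p, q, h, if_true, le_refl, true_and]
      positivity
    · simp only [p, q, h, if_false]
      exact ⟨(hmem' k).1, min_le_max, (hmem' k).2⟩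
  have hsep (k l : Fin m) (hkl : k < l) : q k ≤ p l ∨ q l ≤ p k := by
    by_cases hk : (E k).1 = (E k).2
    · exact Or.inl (by simpa [q, hk] using (hbounds l).1)
    by_cases hl : (E l).1 = (E l).2
    · exact Or.inr (by simpa [q, hl] using (hbounds k).1)
    simp only [p, q, hk, hl, if_false]
    exact le_or_le_of_disjoint_Ioc (min_lt_max.2 hk) (min_lt_max.2 hl)
      (hdisj (by simp) (by simp) (by simpa [Fin.val_eq_val] using hkl.ne))
  have := hf m p q hbounds hsep (by simpa [Finset.sum_range, hpq] using hlen)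
  simpa [Finset.sum_range, hpq] using this

theorem AbsolutelyContinuousOnInterval.fun_sum {ι : Type*} {s : Finset ι} {f : ι → ℝ → ℝ}
    {a b : ℝ} (hf : ∀ i ∈ s, AbsolutelyContinuousOnInterval (f i) a b) :
    AbsolutelyContinuousOnInterval (fun x => ∑ i ∈ s, f i x) a b := by
  classical
  induction s using Finset.induction_on with
  | empty =>
    simpa using (LipschitzWith.const (0 : ℝ)).lipschitzOnWith.absolutelyContinuousOnInterval
  | insert i s hi ih =>
    simp only [Finset.sum_insert hi]
    exact (hf i (Finset.mem_insert_self i s)).fun_add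
      (ih fun k hk => hf k (Finset.mem_insert_of_mem hk))

theorem AbsolutelyContinuousOnInterval.le_of_ae_deriv_nonneg {f : ℝ → ℝ} {a b : ℝ}
    (hab : a ≤ b) (hf : AbsolutelyContinuousOnInterval f a b)
    (hf' : ∀ᵐ x, x ∈ Icc a b → 0 ≤ deriv f x) : f a ≤ f b := by
  rw [← sub_nonneg, ← hf.integral_deriv_eq_sub]
  exact intervalIntegral.integral_nonneg_of_ae_restrict hab
    ((MeasureTheory.ae_restrict_iff' measurableSet_Icc).2 hf')

namespace IsFluidSol

variable {I J : ℕ} {A : Fin J → Fin I → ℝ} {C : Fin J → ℝ} {ν μ : Fin I → ℝ}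
  {Λ : (Fin I → ℝ) → Fin I → ℝ} {n : ℝ → Fin I → ℝ} {t : ℝ}

theorem hasDerivWithinAt_coord (hsol : IsFluidSol A C ν μ Λ n) (ht : 0 ≤ t)
    (hdiff : ∀ i, DifferentiableWithinAt ℝ (fun s => n s i) (Ici 0) t) (i : Fin I) :
    HasDerivWithinAt (fun s => n s i) (if 0 < n t i then ν i - μ i * Λ (n t) i else 0)
      (Ici 0) t := by
  obtain ⟨hder, -⟩ := hsol.2.2 t ht hdiff
  split_ifs with h
  · exact (hder i).1 h
  · exact (hder i).2 (le_antisymm (not_lt.1 h) (hsol.2.1 t ht i))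

theorem hasDerivWithinAt_workload (hμ : ∀ i, 0 < μ i) (hsol : IsFluidSol A C ν μ Λ n)
    (ht : 0 ≤ t) (hdiff : ∀ i, DifferentiableWithinAt ℝ (fun s => n s i) (Ici 0) t)
    (j : Fin J) :
    HasDerivWithinAt (fun s => ∑ i, A j i * n s i / μ i)
      (∑ i, A j i * (ν i / μ i) - ∑ i, A j i * (if 0 < n t i then Λ (n t) i else ν i / μ i))
      (Ici 0) t := by
  rw [← Finset.sum_sub_distrib]
  refine HasDerivWithinAt.fun_sum fun i _ => ?_
  have hrate : A j i * (ν i / μ i) - A j i * (if 0 < n t i then Λ (n t) i else ν i / μ i)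
      = A j i * (if 0 < n t i then ν i - μ i * Λ (n t) i else 0) / μ i := by
    have := (hμ i).ne'
    split_ifs
    · field_simp
    · ring
  rw [hrate]
  exact ((hsol.hasDerivWithinAt_coord ht hdiff i).const_mul (A j i)).div_const (μ i)

theorem deriv_workload_nonneg (hμ : ∀ i, 0 < μ i) (hsol : IsFluidSol A C ν μ Λ n)
    {j : Fin J} (hj : j ∈ Jstar A C ν μ) (ht : 0 ≤ t)
    (hdiff : ∀ i, DifferentiableAt ℝ (fun s => n s i) t) :
    0 ≤ deriv (fun s => ∑ i, A j i * n s i / μ i) t := by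
  have hw : DifferentiableAt ℝ (fun s => ∑ i, A j i * n s i / μ i) t := by fun_prop
  have hU := uniqueDiffOn_Ici 0 t ht
  have hdiff' i := (hdiff i).differentiableWithinAt (s := Ici 0)
  rw [← hw.derivWithin hU, (hsol.hasDerivWithinAt_workload hμ ht hdiff' j).derivWithin hU,
    sub_nonneg, hj]
  exact (hsol.2.2 t ht hdiff').2 j

end IsFluidSol

theorem stmt12_general {I J : ℕ}
    (A : Fin J → Fin I → ℝ)
    (C : Fin J → ℝ)
    (ν μ : Fin I → ℝ) (hμ : ∀ i, 0 < μ i)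
    (Λ : (Fin I → ℝ) → Fin I → ℝ)
    (n : ℝ → Fin I → ℝ) (hsol : IsFluidSol A C ν μ Λ n)
    (j : Fin J) (hj : j ∈ Jstar A C ν μ) :
    MonotoneOn (fun t => ∑ i, A j i * n t i / μ i) (Ici (0:ℝ)) := by
  intro a (ha : 0 ≤ a) b (hb : 0 ≤ b) hab
  have hcoord (i : Fin I) : AbsolutelyContinuousOnInterval (fun t => n t i) a b :=
    (hsol.1 i).absolutelyContinuousOnInterval ha hb
  have hworkload : AbsolutelyContinuousOnInterval (fun t => ∑ i, A j i * n t i / μ i) a b :=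
    AbsolutelyContinuousOnInterval.fun_sum fun i _ => by
      convert (hcoord i).const_mul (A j i / μ i) using 1
      ext t
      ring
  refine hworkload.le_of_ae_deriv_nonneg hab ?_
  have hdiff : ∀ᵐ x, ∀ i, x ∈ uIcc a b → DifferentiableAt ℝ (fun t => n t i) x :=
    MeasureTheory.ae_all_iff.2 fun i => (hcoord i).ae_differentiableAt
  filter_upwards [hdiff] with x hx hxab
  exact hsol.deriv_workload_nonneg hμ hj (ha.trans hxab.1)
    fun i => hx i (Icc_subset_uIcc hxab)

theorem stmt12 {I J : ℕ} (hI : 0 < I) (hJ : 0 < J)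
    (A : Fin J → Fin I → ℝ) (hA01 : ∀ j i, A j i = 0 ∨ A j i = 1)
    (hAcol : ∀ i, ∃ j, A j i = 1) (hArank : LinearIndependent ℝ A)
    (C : Fin J → ℝ) (hC : ∀ j, 0 < C j)
    (α : ℝ) (hα : 0 < α) (κ : Fin I → ℝ) (hκ : ∀ i, 0 < κ i)
    (ν μ : Fin I → ℝ) (hν : ∀ i, 0 < ν i) (hμ : ∀ i, 0 < μ i)
    (hload : ∀ j, (∑ i, A j i * (ν i / μ i)) ≤ C j)
    (hJs : (Jstar A C ν μ).Nonempty)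
    (Λ : (Fin I → ℝ) → Fin I → ℝ)
    (hΛ : ∀ n : Fin I → ℝ, (∀ i, 0 ≤ n i) → IsAlloc A C α κ n (Λ n))
    (n : ℝ → Fin I → ℝ) (hsol : IsFluidSol A C ν μ Λ n)
    (j : Fin J) (hj : j ∈ Jstar A C ν μ) :
    MonotoneOn (fun t => ∑ i, A j i * n t i / μ i) (Ici (0:ℝ)) :=
  stmt12_general A C ν μ hμ Λ n hsol j hj
end
end

section
/- For each w ∈ ℝ₊^{J*}, a vector n ∈ ℝ₊^I is the unique optimal solution of the problem of minimizing F over {n ≥ 0 : Σ_i A_{ji} n_i/μ_i ≥ w_j for all j ∈ J*} if and only if there exists p ∈ ℝ₊^{J*} such that: (i) n_i = ρ_i ((Σ_{j∈J*} p_j A_{ji}) / κ_i)^{1/α} for every route i; (ii) p_j (Σ_i A_{ji} n_i/μ_i − w_j) = 0 for every j ∈ J*; and (iii) Σ_i A_{ji} n_i/μ_i ≥ w_j for every j ∈ J*. -/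
open Real Set

noncomputable section

/- `F` is strictly convex, so it has at most one minimizer on the polyhedron `WFeasible`, and the
KKT conditions are sufficient by the gradient inequality: at `n = priceAlloc p` the gradient of `F`
is `(∑ j, p j * A j i) / μ i`, whose pairing with `m - n` is `∑ j, p j * (wl m j - wl n j) ≥ 0` by
complementary slackness.
Multipliers exist because, for suitable weights `c i > 0`, the concave dual function
`Φ p = ∑ j, p j * w j - ∑ i, c i * (∑ j, p j * A j i) ^ (1 + 1 / α)`, whose gradient is
`w - wl (priceAlloc p)`, attains its maximum on the cone of nonnegative prices supported on `J*`:
a full-rank `0/1` matrix has an entry `1` in every row, so `Φ` tends to `-∞` along that cone.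
The first-order conditions at the maximizer are exactly the KKT conditions. -/

lemma rpow_add_one_add_mul_sub_le {α x y : ℝ} (hα : 0 < α) (hx : 0 ≤ x) (hy : 0 ≤ y) :
    x ^ (α + 1) + (α + 1) * x ^ α * (y - x) ≤ y ^ (α + 1) := by
  rcases hx.eq_or_lt with rfl | hx
  · simp [Real.zero_rpow hα.ne', Real.zero_rpow (by positivity : α + 1 ≠ 0),
      Real.rpow_nonneg hy]
  -- Bernoulli's inequality for `y / x = 1 + (y / x - 1)`, scaled by `x ^ (α + 1)`.
  have bernoulli := one_add_mul_self_le_rpow_one_add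
    (by linarith [div_nonneg hy hx.le] : -1 ≤ y / x - 1) (by linarith : 1 ≤ α + 1)
  rw [add_sub_cancel, Real.div_rpow hy hx.le, le_div_iff₀ (by positivity)] at bernoulli
  calc x ^ (α + 1) + (α + 1) * x ^ α * (y - x)
      = (1 + (α + 1) * (y / x - 1)) * x ^ (α + 1) := by
        rw [Real.rpow_add_one hx.ne']; field_simp
    _ ≤ y ^ (α + 1) := bernoulli

lemma strictConvexOn_univ_pi_sum {ι : Type*} [Fintype ι] {s : Set ℝ} {f : ι → ℝ → ℝ}
    (hf : ∀ i, StrictConvexOn ℝ s (f i)) :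
    StrictConvexOn ℝ (univ.pi fun _ => s) fun x => ∑ i, f i (x i) := by
  refine ⟨convex_pi fun i _ => (hf i).1, fun x hx y hy hxy a b ha hb hab => ?_⟩
  obtain ⟨i₀, hi₀⟩ := Function.ne_iff.1 hxy
  simp only [Finset.smul_sum, ← Finset.sum_add_distrib, Pi.add_apply, Pi.smul_apply]
  refine Finset.sum_lt_sum (fun i _ => (hf i).convexOn.2 (hx i trivial) (hy i trivial)
    ha.le hb.le hab) ⟨i₀, Finset.mem_univ _, (hf i₀).2 (hx i₀ trivial) (hy i₀ trivial) hi₀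
    ha hb hab⟩

lemma strictConvexOn_mul_div_rpow {K ν p : ℝ} (hK : 0 < K) (hν : 0 < ν) (hp : 1 < p) :
    StrictConvexOn ℝ (Ici 0) fun t => K * (t / ν) ^ p := by
  refine ⟨convex_Ici 0, fun x hx y hy hxy a b ha hb hab => ?_⟩
  have h := (strictConvexOn_rpow hp).2 (div_nonneg hx hν.le) (div_nonneg hy hν.le)
    (by simpa [hν.ne'] using hxy) ha hb hab
  simp only [smul_eq_mul] at h ⊢
  calc K * ((a * x + b * y) / ν) ^ p = K * (a * (x / ν) + b * (y / ν)) ^ p := by ring_nf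
    _ < K * (a * (x / ν) ^ p + b * (y / ν) ^ p) := mul_lt_mul_of_pos_left h hK
    _ = a * (K * (x / ν) ^ p) + b * (K * (y / ν) ^ p) := by ring

section Lyapunov

variable {I : ℕ} {α : ℝ} {κ ν μ : Fin I → ℝ}

lemma strictConvexOn_Ffun (hα : 0 < α) (hκ : ∀ i, 0 < κ i) (hν : ∀ i, 0 < ν i)
    (hμ : ∀ i, 0 < μ i) : StrictConvexOn ℝ (Ici 0) (Ffun α κ ν μ) := by
  have h := strictConvexOn_univ_pi_sum fun i => strictConvexOn_mul_div_rpow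
    (K := 1 / (α + 1) * (ν i * κ i * μ i ^ (α - 1))) (by
      have := Real.rpow_pos_of_pos (hμ i) (α - 1)
      have := hν i; have := hκ i; positivity) (hν i) (by linarith : 1 < α + 1)
  rw [pi_univ_Ici] at h
  refine h.congr fun n _ => ?_
  simp only [Ffun, Finset.mul_sum, mul_assoc]

lemma Ffun_add_sum_mul_sub_le (hα : 0 < α) (hκ : ∀ i, 0 < κ i) (hν : ∀ i, 0 < ν i)
    (hμ : ∀ i, 0 < μ i) {n m : Fin I → ℝ} (hn : ∀ i, 0 ≤ n i) (hm : ∀ i, 0 ≤ m i) :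
    Ffun α κ ν μ n + ∑ i, κ i * μ i ^ (α - 1) * (n i / ν i) ^ α * (m i - n i)
      ≤ Ffun α κ ν μ m := by
  simp only [Ffun, Finset.mul_sum, ← Finset.sum_add_distrib]
  refine Finset.sum_le_sum fun i _ => ?_
  have hc : 0 ≤ ν i * κ i * μ i ^ (α - 1) / (α + 1) := by
    have := Real.rpow_pos_of_pos (hμ i) (α - 1)
    have := hν i; have := hκ i; positivity
  have h := mul_le_mul_of_nonneg_left (rpow_add_one_add_mul_sub_le hα
    (div_nonneg (hn i) (hν i).le) (div_nonneg (hm i) (hν i).le)) hc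
  calc 1 / (α + 1) * (ν i * κ i * μ i ^ (α - 1) * (n i / ν i) ^ (α + 1))
        + κ i * μ i ^ (α - 1) * (n i / ν i) ^ α * (m i - n i)
      = ν i * κ i * μ i ^ (α - 1) / (α + 1) * ((n i / ν i) ^ (α + 1)
        + (α + 1) * (n i / ν i) ^ α * (m i / ν i - n i / ν i)) := by
        field_simp [(hν i).ne', (by linarith : α + 1 ≠ 0)]
    _ ≤ _ := h
    _ = _ := by ring

end Lyapunov

lemma le_rpow_inv_sub_one_of_mul_rpow_le {a b x β : ℝ} (ha : 0 < a) (hb : 0 ≤ b) (hx : 0 ≤ x)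
    (hβ : 1 < β) (h : a * x ^ β ≤ b * x) : x ≤ (b / a) ^ (β - 1)⁻¹ := by
  rcases hx.eq_or_lt with rfl | hx
  · exact Real.rpow_nonneg (div_nonneg hb ha.le) _
  have hpow : x ^ (β - 1) ≤ b / a := by
    rw [le_div_iff₀ ha, Real.rpow_sub_one hx.ne', div_mul_eq_mul_div, div_le_iff₀ hx]
    linarith
  calc x = (x ^ (β - 1)) ^ (β - 1)⁻¹ := by
        rw [← Real.rpow_mul hx.le, mul_inv_cancel₀ (by linarith), Real.rpow_one]
    _ ≤ (b / a) ^ (β - 1)⁻¹ := Real.rpow_le_rpow (by positivity) hpow (by simp; linarith)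

lemma HasDerivAt.nonpos_of_isMaxOn_Ici {f : ℝ → ℝ} {f' a x : ℝ} (hf : HasDerivAt f f' x)
    (hmax : IsMaxOn f (Ici a) x) (hx : a ≤ x) : f' ≤ 0 := by
  have hone : (1 : ℝ) ∈ posTangentConeAt (Ici a) x :=
    mem_posTangentConeAt_of_segment_subset
      ((convex_Ici a).segment_subset hx (by simp only [mem_Ici]; linarith))
  simpa using hmax.localize.hasFDerivWithinAt_nonpos hf.hasDerivWithinAt hone

lemma HasDerivAt.eq_zero_of_isMaxOn_Ici {f : ℝ → ℝ} {f' a x : ℝ} (hf : HasDerivAt f f' x)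
    (hmax : IsMaxOn f (Ici a) x) (hx : a < x) : f' = 0 :=
  (hmax.isLocalMax (Ici_mem_nhds hx)).hasDerivAt_eq_zero hf

def priceCone {m : Type*} (S : Set m) : Set (m → ℝ) :=
  {p | (∀ j, 0 ≤ p j) ∧ ∀ j, j ∉ S → p j = 0}

lemma isClosed_priceCone {m : Type*} (S : Set m) : IsClosed (priceCone S) := by
  simp only [priceCone, Set.ofPred_and, Set.ofPred_forall]
  exact (isClosed_iInter fun j => isClosed_le continuous_const (continuous_apply j)).inter
    (isClosed_iInter fun j => isClosed_iInter fun _ =>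
      isClosed_eq (continuous_apply j) continuous_const)

section Dual

variable {m n : Type*} [Fintype m] [Fintype n] (A : m → n → ℝ) (c : n → ℝ) (β : ℝ)
  (w : m → ℝ)

def dualObjective (p : m → ℝ) : ℝ :=
  ∑ k, p k * w k - ∑ i, c i * (∑ k, p k * A k i) ^ β

variable {A c β w}

lemma continuous_dualObjective (hβ : 0 ≤ β) : Continuous (dualObjective A c β w) := by
  unfold dualObjective
  fun_prop (disch := exact Or.inr hβ)

lemma le_of_dualObjective_nonneg (hA : ∀ j i, 0 ≤ A j i) (hrow : ∀ j, ∃ i, 1 ≤ A j i)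
    (hc : ∀ i, 0 < c i) (hβ : 1 < β) {p : m → ℝ} (hp : ∀ j, 0 ≤ p j)
    (h0 : 0 ≤ dualObjective A c β w p) (j : m) :
    p j ≤ ∑ i, ((∑ k, |w k|) / c i) ^ (β - 1)⁻¹ := by
  obtain ⟨j₀, -, hj₀⟩ := Finset.exists_max_image Finset.univ p ⟨j, Finset.mem_univ j⟩
  obtain ⟨i₀, hi₀⟩ := hrow j₀
  have hσ : ∀ i, 0 ≤ ∑ k, p k * A k i := fun i =>
    Finset.sum_nonneg fun k _ => mul_nonneg (hp k) (hA k i)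
  have hgain : ∑ k, p k * w k ≤ (∑ k, |w k|) * p j₀ := by
    rw [Finset.sum_mul]
    refine Finset.sum_le_sum fun k _ => ?_
    calc p k * w k ≤ p k * |w k| := mul_le_mul_of_nonneg_left (le_abs_self _) (hp k)
      _ ≤ |w k| * p j₀ := by
        rw [mul_comm]; exact mul_le_mul_of_nonneg_left (hj₀ k (Finset.mem_univ k)) (abs_nonneg _)
  have hσ₀ : p j₀ ≤ ∑ k, p k * A k i₀ :=
    calc p j₀ ≤ p j₀ * A j₀ i₀ := le_mul_of_one_le_right (hp j₀) hi₀
      _ ≤ ∑ k, p k * A k i₀ := Finset.single_le_sum (f := fun k => p k * A k i₀)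
          (fun k _ => mul_nonneg (hp k) (hA k i₀)) (Finset.mem_univ j₀)
  have hcost : c i₀ * p j₀ ^ β ≤ ∑ i, c i * (∑ k, p k * A k i) ^ β :=
    calc c i₀ * p j₀ ^ β ≤ c i₀ * (∑ k, p k * A k i₀) ^ β := by
          gcongr
          exacts [(hc i₀).le, hp j₀]
      _ ≤ _ := Finset.single_le_sum (f := fun i => c i * (∑ k, p k * A k i) ^ β)
          (fun i _ => mul_nonneg (hc i).le (Real.rpow_nonneg (hσ i) _)) (Finset.mem_univ i₀)
  have hW : 0 ≤ ∑ k, |w k| := Finset.sum_nonneg fun k _ => abs_nonneg _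
  calc p j ≤ p j₀ := hj₀ j (Finset.mem_univ j)
    _ ≤ ((∑ k, |w k|) / c i₀) ^ (β - 1)⁻¹ :=
        le_rpow_inv_sub_one_of_mul_rpow_le (hc i₀) hW (hp j₀) hβ
          (by unfold dualObjective at h0; linarith)
    _ ≤ _ := Finset.single_le_sum (f := fun i => ((∑ k, |w k|) / c i) ^ (β - 1)⁻¹)
        (fun i _ => Real.rpow_nonneg (div_nonneg hW (hc i).le) _) (Finset.mem_univ i₀)

lemma exists_isMaxOn_dualObjective (hA : ∀ j i, 0 ≤ A j i) (hrow : ∀ j, ∃ i, 1 ≤ A j i)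
    (hc : ∀ i, 0 < c i) (hβ : 1 < β) (S : Set m) :
    ∃ q ∈ priceCone S, IsMaxOn (dualObjective A c β w) (priceCone S) q := by
  have hcont : Continuous (dualObjective A c β w) := continuous_dualObjective (by linarith)
  -- Maximize over the superlevel set `{Φ ≥ Φ 0 = 0}`, which coercivity confines to a box.
  set T := priceCone S ∩ {p | 0 ≤ dualObjective A c β w p}
  have h0T : (0 : m → ℝ) ∈ T :=
    ⟨⟨fun _ => le_rfl, fun _ _ => rfl⟩, by
      simp [dualObjective, Real.zero_rpow (by linarith : β ≠ 0)]⟩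
  have hT : IsCompact T :=
    (isCompact_Icc (a := (0 : m → ℝ))
      (b := fun _ => ∑ i, ((∑ k, |w k|) / c i) ^ (β - 1)⁻¹)).of_isClosed_subset
      ((isClosed_priceCone S).inter (isClosed_le continuous_const hcont))
      fun p hp => ⟨hp.1.1, le_of_dualObjective_nonneg hA hrow hc hβ hp.1.1 hp.2⟩
  obtain ⟨q, hqT, hq⟩ := hT.exists_isMaxOn ⟨0, h0T⟩ hcont.continuousOn
  refine ⟨q, hqT.1, isMaxOn_iff.2 fun p hp => ?_⟩
  by_cases hpT : 0 ≤ dualObjective A c β w p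
  · exact isMaxOn_iff.1 hq p ⟨hp, hpT⟩
  · exact (not_le.1 hpT).le.trans hqT.2

lemma hasDerivAt_dualObjective_add_smul_single [DecidableEq m] (hβ : 1 ≤ β) (q : m → ℝ)
    (j : m) :
    HasDerivAt (fun t : ℝ => dualObjective A c β w (q + t • Pi.single j 1))
      (w j - ∑ i, c i * (A j i * β * (∑ k, q k * A k i) ^ (β - 1))) 0 := by
  have hline : ∀ t : ℝ, dualObjective A c β w (q + t • Pi.single j 1)
      = ∑ k, q k * w k + t * w j - ∑ i, c i * (∑ k, q k * A k i + t * A j i) ^ β := fun t => by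
    simp [dualObjective, add_mul, Finset.sum_add_distrib, Pi.single_apply]
  simp only [hline]
  have hσ : ∀ i, HasDerivAt (fun t : ℝ => c i * (∑ k, q k * A k i + t * A j i) ^ β)
      (c i * (A j i * β * (∑ k, q k * A k i) ^ (β - 1))) 0 := fun i => by
    simpa using ((((hasDerivAt_id (0 : ℝ)).mul_const (A j i)).const_add
      (∑ k, q k * A k i)).rpow_const (Or.inr hβ)).const_mul (c i)
  simpa using (((hasDerivAt_id (0 : ℝ)).mul_const (w j)).const_add (∑ k, q k * w k)).fun_sub
    (HasDerivAt.fun_sum fun i _ => hσ i)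

lemma kkt_of_isMaxOn_dualObjective (hβ : 1 ≤ β) {S : Set m} {q : m → ℝ}
    (hq : q ∈ priceCone S) (hmax : IsMaxOn (dualObjective A c β w) (priceCone S) q)
    {j : m} (hj : j ∈ S) :
    w j ≤ ∑ i, c i * (A j i * β * (∑ k, q k * A k i) ^ (β - 1)) ∧
      q j * (∑ i, c i * (A j i * β * (∑ k, q k * A k i) ^ (β - 1)) - w j) = 0 := by
  classical
  have hderiv := hasDerivAt_dualObjective_add_smul_single (A := A) (c := c) (w := w) hβ q j
  -- Along the coordinate line through `q` the cone is the half-line `t ≥ -q j`.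
  have hline : IsMaxOn (fun t : ℝ => dualObjective A c β w (q + t • Pi.single j 1))
      (Ici (-q j)) 0 := by
    refine isMaxOn_iff.2 fun t ht => ?_
    have hmem : q + t • Pi.single j 1 ∈ priceCone S := by
      refine ⟨fun k => ?_, fun k hk => ?_⟩
      · rcases eq_or_ne k j with rfl | hkj
        · simp only [Pi.add_apply, Pi.smul_apply, Pi.single_eq_same, smul_eq_mul, mul_one]
          linarith [mem_Ici.1 ht]
        · simpa [Pi.single_eq_of_ne hkj] using hq.1 k
      · have hkj : k ≠ j := fun h => hk (h ▸ hj)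
        simpa [Pi.single_eq_of_ne hkj] using hq.2 k hk
    simpa using isMaxOn_iff.1 hmax _ hmem
  have hle := hderiv.nonpos_of_isMaxOn_Ici hline (by linarith [hq.1 j])
  refine ⟨by linarith, ?_⟩
  rcases (hq.1 j).eq_or_lt with h | h
  · rw [← h, zero_mul]
  · rw [show ∑ i, c i * (A j i * β * (∑ k, q k * A k i) ^ (β - 1)) - w j = 0 by
      linarith [hderiv.eq_zero_of_isMaxOn_Ici hline (by linarith)], mul_zero]

end Dual

section Allocation

variable {I J : ℕ} (A : Fin J → Fin I → ℝ) (C : Fin J → ℝ) (α : ℝ) (κ ν μ : Fin I → ℝ)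

def priceAlloc (p : Fin J → ℝ) : Fin I → ℝ :=
  fun i => (ν i / μ i) * ((∑ k, p k * A k i) / κ i) ^ (1 / α)

variable {A C α κ ν μ}

lemma convex_WFeasible (w : Fin J → ℝ) : Convex ℝ (WFeasible A C ν μ w) := by
  rintro x ⟨hx0, hx⟩ y ⟨hy0, hy⟩ a b ha hb hab
  refine ⟨fun i => add_nonneg (mul_nonneg ha (hx0 i)) (mul_nonneg hb (hy0 i)),
    fun j hj => ?_⟩
  have hsum : ∑ i, A j i * (a • x + b • y) i / μ i
      = a * ∑ i, A j i * x i / μ i + b * ∑ i, A j i * y i / μ i := by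
    simp only [Finset.mul_sum, ← Finset.sum_add_distrib, Pi.add_apply, Pi.smul_apply,
      smul_eq_mul]
    exact Finset.sum_congr rfl fun i _ => by ring
  calc w j = a * w j + b * w j := by rw [← add_mul, hab, one_mul]
    _ ≤ _ := by rw [hsum]; gcongr; exacts [hx j hj, hy j hj]

lemma sum_mul_wl_sub_wl (p : Fin J → ℝ) (m n : Fin I → ℝ) :
    ∑ i, (∑ k, p k * A k i) / μ i * (m i - n i) = ∑ j, p j * (wl A μ m j - wl A μ n j) := by
  simp only [wl, ← Finset.sum_sub_distrib, Finset.mul_sum,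
    Finset.sum_div, Finset.sum_mul]
  rw [Finset.sum_comm]
  exact Finset.sum_congr rfl fun j _ => Finset.sum_congr rfl fun i _ => by ring

lemma priceAlloc_nonneg (hκ : ∀ i, 0 < κ i) (hν : ∀ i, 0 < ν i) (hμ : ∀ i, 0 < μ i)
    {p : Fin J → ℝ} (hσ : ∀ i, 0 ≤ ∑ k, p k * A k i) (i : Fin I) : 0 ≤ priceAlloc A α κ ν μ p i :=
  mul_nonneg (div_nonneg (hν i).le (hμ i).le)
    (Real.rpow_nonneg (div_nonneg (hσ i) (hκ i).le) _)

lemma mul_rpow_priceAlloc_div (hα : 0 < α) (hκ : ∀ i, 0 < κ i) (hν : ∀ i, 0 < ν i)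
    (hμ : ∀ i, 0 < μ i) {p : Fin J → ℝ} {i : Fin I} (hσ : 0 ≤ ∑ k, p k * A k i) :
    κ i * μ i ^ (α - 1) * (priceAlloc A α κ ν μ p i / ν i) ^ α = (∑ k, p k * A k i) / μ i := by
  have hs : 0 ≤ (∑ k, p k * A k i) / κ i := div_nonneg hσ (hκ i).le
  have hx : priceAlloc A α κ ν μ p i / ν i = ((∑ k, p k * A k i) / κ i) ^ (1 / α) / μ i := by
    simp only [priceAlloc]
    field_simp [(hν i).ne', (hμ i).ne']
  rw [hx, Real.div_rpow (Real.rpow_nonneg hs _) (hμ i).le, ← Real.rpow_mul hs,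
    one_div_mul_cancel hα.ne', Real.rpow_one, Real.rpow_sub (hμ i), Real.rpow_one]
  field_simp [(hκ i).ne', (Real.rpow_pos_of_pos (hμ i) α).ne', (hμ i).ne']

lemma isMinOn_Ffun_priceAlloc (hA : ∀ j i, 0 ≤ A j i) (hα : 0 < α) (hκ : ∀ i, 0 < κ i)
    (hν : ∀ i, 0 < ν i) (hμ : ∀ i, 0 < μ i) {w p : Fin J → ℝ} (hp : p ∈ priceCone (Jstar A C ν μ))
    (hkkt : ∀ j ∈ Jstar A C ν μ, w j ≤ wl A μ (priceAlloc A α κ ν μ p) j ∧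
      p j * (wl A μ (priceAlloc A α κ ν μ p) j - w j) = 0) :
    priceAlloc A α κ ν μ p ∈ WFeasible A C ν μ w ∧
      IsMinOn (Ffun α κ ν μ) (WFeasible A C ν μ w) (priceAlloc A α κ ν μ p) := by
  set n := priceAlloc A α κ ν μ p
  have hσ : ∀ i, 0 ≤ ∑ k, p k * A k i := fun i =>
    Finset.sum_nonneg fun k _ => mul_nonneg (hp.1 k) (hA k i)
  have hn : ∀ i, 0 ≤ n i := priceAlloc_nonneg hκ hν hμ hσ
  refine ⟨⟨hn, fun j hj => (hkkt j hj).1⟩, isMinOn_iff.2 fun m hm => ?_⟩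
  have hpair : 0 ≤ ∑ j, p j * (wl A μ m j - wl A μ n j) := by
    refine Finset.sum_nonneg fun j _ => ?_
    by_cases hj : j ∈ Jstar A C ν μ
    · have hmj : w j ≤ wl A μ m j := hm.2 j hj
      nlinarith [(hkkt j hj).2, mul_nonneg (hp.1 j) (sub_nonneg.2 hmj)]
    · simp [hp.2 j hj]
  have hgrad : ∑ i, κ i * μ i ^ (α - 1) * (n i / ν i) ^ α * (m i - n i)
      = ∑ j, p j * (wl A μ m j - wl A μ n j) := by
    rw [← sum_mul_wl_sub_wl]
    exact Finset.sum_congr rfl fun i _ =>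
      congrArg (· * (m i - n i)) (mul_rpow_priceAlloc_div hα hκ hν hμ (hσ i))
  linarith [Ffun_add_sum_mul_sub_le hα hκ hν hμ hn hm.1]

lemma exists_priceAlloc_kkt (hA : ∀ j i, 0 ≤ A j i) (hrow : ∀ j, ∃ i, 1 ≤ A j i)
    (hα : 0 < α) (hκ : ∀ i, 0 < κ i) (hν : ∀ i, 0 < ν i) (hμ : ∀ i, 0 < μ i)
    (w : Fin J → ℝ) (S : Set (Fin J)) :
    ∃ p ∈ priceCone S, ∀ j ∈ S, w j ≤ wl A μ (priceAlloc A α κ ν μ p) j ∧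
      p j * (wl A μ (priceAlloc A α κ ν μ p) j - w j) = 0 := by
  -- `β` and `c` are chosen so that the gradient of the dual objective is `w - wl (priceAlloc p)`.
  set β := 1 + 1 / α
  set c : Fin I → ℝ := fun i => ν i / (β * μ i ^ 2 * κ i ^ (1 / α))
  have hβ : 1 < β := by simp only [β]; linarith [one_div_pos.2 hα]
  have hc : ∀ i, 0 < c i := fun i => by
    have := Real.rpow_pos_of_pos (hκ i) (1 / α)
    have := hν i; have := hμ i
    simp only [c]; positivity
  obtain ⟨p, hp, hmax⟩ := exists_isMaxOn_dualObjective (w := w) hA hrow hc hβ S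
  refine ⟨p, hp, fun j hj => ?_⟩
  have hwl : wl A μ (priceAlloc A α κ ν μ p) j
      = ∑ i, c i * (A j i * β * (∑ k, p k * A k i) ^ (β - 1)) := by
    refine Finset.sum_congr rfl fun i _ => ?_
    have hσ : 0 ≤ ∑ k, p k * A k i :=
      Finset.sum_nonneg fun k _ => mul_nonneg (hp.1 k) (hA k i)
    have := Real.rpow_pos_of_pos (hκ i) (1 / α)
    rw [show β - 1 = 1 / α by simp only [β]; ring, priceAlloc, Real.div_rpow hσ (hκ i).le]
    simp only [c]
    field_simp [(hμ i).ne', (hκ i).ne', hβ.ne', (hν i).ne']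
  rw [hwl]
  exact kkt_of_isMaxOn_dualObjective hβ.le hp hmax hj

end Allocation

theorem stmt14_general {I J : ℕ}
    (A : Fin J → Fin I → ℝ) (hA01 : ∀ j i, A j i = 0 ∨ A j i = 1)
    (hArank : LinearIndependent ℝ A) (C : Fin J → ℝ)
    (α : ℝ) (hα : 0 < α) (κ : Fin I → ℝ) (hκ : ∀ i, 0 < κ i)
    (ν μ : Fin I → ℝ) (hν : ∀ i, 0 < ν i) (hμ : ∀ i, 0 < μ i)
    (w : Fin J → ℝ) (n : Fin I → ℝ) :
    (n ∈ WFeasible A C ν μ w ∧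
        ∀ m ∈ WFeasible A C ν μ w, Ffun α κ ν μ n ≤ Ffun α κ ν μ m) ↔
      ∃ p : Fin J → ℝ, (∀ j, 0 ≤ p j) ∧ (∀ j, j ∉ Jstar A C ν μ → p j = 0) ∧
        (∀ i, n i = (ν i / μ i) * ((∑ j, p j * A j i) / κ i) ^ (1 / α)) ∧
        (∀ j ∈ Jstar A C ν μ, p j * ((∑ i, A j i * n i / μ i) - w j) = 0) ∧
        ∀ j ∈ Jstar A C ν μ, w j ≤ ∑ i, A j i * n i / μ i := by
  have hA : ∀ j i, 0 ≤ A j i := fun j i => by rcases hA01 j i with h | h <;> simp [h]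
  have hrow : ∀ j, ∃ i, 1 ≤ A j i := fun j => by
    obtain ⟨i, hi⟩ := Function.ne_iff.1 (hArank.ne_zero j)
    exact ⟨i, ((hA01 j i).resolve_left hi).ge⟩
  rw [← isMinOn_iff]
  constructor
  · rintro ⟨hnW, hnmin⟩
    obtain ⟨p, hp, hkkt⟩ := exists_priceAlloc_kkt hA hrow hα hκ hν hμ w (Jstar A C ν μ)
    obtain ⟨hpW, hpmin⟩ := isMinOn_Ffun_priceAlloc hA hα hκ hν hμ hp hkkt
    obtain rfl : n = priceAlloc A α κ ν μ p :=
      ((strictConvexOn_Ffun hα hκ hν hμ).subset (fun _ hm => hm.1)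
        (convex_WFeasible w)).eq_of_isMinOn hnmin hpmin hnW hpW
    exact ⟨p, hp.1, hp.2, fun i => rfl, fun j hj => (hkkt j hj).2, fun j hj => (hkkt j hj).1⟩
  · rintro ⟨p, hp0, hpS, hn, hcs, hfeas⟩
    obtain rfl : n = priceAlloc A α κ ν μ p := funext hn
    exact isMinOn_Ffun_priceAlloc hA hα hκ hν hμ ⟨hp0, hpS⟩ fun j hj => ⟨hfeas j hj, hcs j hj⟩

theorem stmt14 {I J : ℕ} (hI : 0 < I) (hJ : 0 < J)
    (A : Fin J → Fin I → ℝ) (hA01 : ∀ j i, A j i = 0 ∨ A j i = 1)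
    (hAcol : ∀ i, ∃ j, A j i = 1) (hArank : LinearIndependent ℝ A)
    (C : Fin J → ℝ) (hC : ∀ j, 0 < C j)
    (α : ℝ) (hα : 0 < α) (κ : Fin I → ℝ) (hκ : ∀ i, 0 < κ i)
    (ν μ : Fin I → ℝ) (hν : ∀ i, 0 < ν i) (hμ : ∀ i, 0 < μ i)
    (hload : ∀ j, (∑ i, A j i * (ν i / μ i)) ≤ C j)
    (hJs : (Jstar A C ν μ).Nonempty)
    (w : Fin J → ℝ) (hw : ∀ j, 0 ≤ w j) (n : Fin I → ℝ) :
    (n ∈ WFeasible A C ν μ w ∧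
        ∀ m ∈ WFeasible A C ν μ w, Ffun α κ ν μ n ≤ Ffun α κ ν μ m) ↔
      ∃ p : Fin J → ℝ, (∀ j, 0 ≤ p j) ∧ (∀ j, j ∉ Jstar A C ν μ → p j = 0) ∧
        (∀ i, n i = (ν i / μ i) * ((∑ j, p j * A j i) / κ i) ^ (1 / α)) ∧
        (∀ j ∈ Jstar A C ν μ, p j * ((∑ i, A j i * n i / μ i) - w j) = 0) ∧
        ∀ j ∈ Jstar A C ν μ, w j ≤ ∑ i, A j i * n i / μ i :=
  stmt14_general A hA01 hArank C α hα κ hκ ν μ hν hμ w n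
end
end
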